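/- arXiv:0810.2132 — 2 statements merged into one kernel-verified Lean document; each statement's English description precedes it below -/
import Mathlib

section
/- (Inclusion Theorem) Let 0 < q ≤ p ≤ ∞ and 0 < q_j ≤ p_j ≤ ∞ for j = 1,…,n, with 1/q ≤ 1/q_1 + ⋯ + 1/q_n, and suppose 1/q_1 + ⋯ + 1/q_n − 1/q ≤ 1/p_1 + ⋯ + 1/p_n − 1/p. Then every absolutely (q;q_1,…,q_n)-summing continuous n-linear map A : E_1 × ⋯ × E_n → F between real or complex Banach spaces is absolutely (p;p_1,…,p_n)-summing, and π_{(p;p_1,…,p_n)}(A) ≤ π_{(q;q_1,…,q_n)}(A). -/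
open scoped BigOperators NNReal ENNReal

/-- The `ℓ_p` norm of a finite family, for an extended-real exponent `p ∈ (0, ∞]`
(with the sup-norm interpretation when `p = ∞`). -/
noncomputable def lpNormE {F : Type*} [NormedAddCommGroup F] (p : ℝ≥0∞) {m : ℕ}
    (y : Fin m → F) : ℝ :=
  if p = ∞ then ⨆ j, ‖y j‖ else (∑ j, ‖y j‖ ^ p.toReal) ^ (1 / p.toReal)

/-- The weak `ℓ_r` norm of a finite family, for an extended-real exponent `r ∈ (0, ∞]`
(with the interpretation `max_j ‖x_j‖` when `r = ∞`). -/
noncomputable def weakNormE (𝕜 : Type*) [RCLike 𝕜] {E : Type*} [NormedAddCommGroup E]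
    [NormedSpace 𝕜 E] (r : ℝ≥0∞) {m : ℕ} (x : Fin m → E) : ℝ :=
  if r = ∞ then ⨆ j, ‖x j‖
  else ⨆ φ : {φ : E →L[𝕜] 𝕜 // ‖φ‖ ≤ 1}, (∑ j, ‖φ.1 (x j)‖ ^ r.toReal) ^ (1 / r.toReal)

/-- A continuous multilinear map is absolutely `(p; p₁, …, pₙ)`-summing, for
extended-real exponents. -/
def IsAbsSummingE {𝕜 : Type*} [RCLike 𝕜] {n : ℕ} {E : Fin n → Type*}
    [∀ i, NormedAddCommGroup (E i)] [∀ i, NormedSpace 𝕜 (E i)]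
    {F : Type*} [NormedAddCommGroup F] [NormedSpace 𝕜 F]
    (p : ℝ≥0∞) (ps : Fin n → ℝ≥0∞) (A : ContinuousMultilinearMap 𝕜 E F) : Prop :=
  ∃ C > 0, ∀ (m : ℕ) (x : ∀ i, Fin m → E i),
    lpNormE p (fun j => A (fun i => x i j)) ≤ C * ∏ i, weakNormE 𝕜 (ps i) (x i)

/-!
For `p = ∞` the summing inequality, tested on one-term families, bounds every `‖A(x_j)‖`.
For `p < ∞` put `e_i = 1/q_i - 1/p_i`, `σ = ∑ e_i` and `κ = 1/q - σ ≥ 1/p`. Given families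
`x_i`, let `s_j = ‖A(x_j)‖`, `a_j = s_j^(1/κ)`, and test the `(q; q_i)`-inequality on the
rescaled families `a_j^(e_i) x_{i,j}`. Since `σ + κ = 1/q`, the left side becomes
`(∑ a_j)^(1/q)`, while Hölder's inequality bounds each weak `q_i`-norm by `(∑ a_j)^(e_i)` times
the weak `p_i`-norm. Cancelling `(∑ a_j)^σ` bounds `(∑ a_j)^κ`, the `ℓ_(1/κ)`-norm of `(s_j)`,
which dominates its `ℓ_p`-norm because `1/κ ≤ p`.
-/

open Finset

namespace Real

variable {ι : Type*} (s : Finset ι) {f : ι → ℝ}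

theorem sum_rpow_le_rpow_sum (hf : ∀ i ∈ s, 0 ≤ f i) {t : ℝ} (ht : 1 ≤ t) :
    ∑ i ∈ s, f i ^ t ≤ (∑ i ∈ s, f i) ^ t := by
  have ht' : t - 1 + 1 ≠ 0 := by linarith
  calc ∑ i ∈ s, f i ^ t = ∑ i ∈ s, f i ^ (t - 1) * f i :=
        sum_congr rfl fun i hi => by rw [← rpow_add_one' (hf i hi) ht', sub_add_cancel]
    _ ≤ ∑ i ∈ s, (∑ k ∈ s, f k) ^ (t - 1) * f i := sum_le_sum fun i hi =>
        mul_le_mul_of_nonneg_right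
          (rpow_le_rpow (hf i hi) (single_le_sum hf hi) (by linarith)) (hf i hi)
    _ = (∑ i ∈ s, f i) ^ t := by
        rw [← mul_sum, ← rpow_add_one' (sum_nonneg hf) ht', sub_add_cancel]

theorem Lp_le_Lp_of_exponent_le (hf : ∀ i ∈ s, 0 ≤ f i) {u v : ℝ} (hv : 0 < v) (hvu : v ≤ u) :
    (∑ i ∈ s, f i ^ u) ^ (1 / u) ≤ (∑ i ∈ s, f i ^ v) ^ (1 / v) := by
  have hfv : ∀ i ∈ s, 0 ≤ f i ^ v := fun i hi => rpow_nonneg (hf i hi) v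
  have key : ∑ i ∈ s, f i ^ u ≤ (∑ i ∈ s, f i ^ v) ^ (u / v) :=
    calc ∑ i ∈ s, f i ^ u = ∑ i ∈ s, (f i ^ v) ^ (u / v) :=
          sum_congr rfl fun i hi => by rw [← rpow_mul (hf i hi), mul_div_cancel₀ u hv.ne']
      _ ≤ (∑ i ∈ s, f i ^ v) ^ (u / v) := sum_rpow_le_rpow_sum s hfv ((one_le_div hv).2 hvu)
  calc (∑ i ∈ s, f i ^ u) ^ (1 / u) ≤ ((∑ i ∈ s, f i ^ v) ^ (u / v)) ^ (1 / u) := by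
        gcongr
        · exact sum_nonneg fun i hi => rpow_nonneg (hf i hi) u
        · exact (one_div_pos.2 (hv.trans_le hvu)).le
    _ = (∑ i ∈ s, f i ^ v) ^ (1 / v) := by
        rw [← rpow_mul (sum_nonneg hfv)]
        congr 1
        field_simp [(hv.trans_le hvu).ne']

/-- Hölder's inequality for the exponents `1/e` and `v`, using `‖(a_i^e)‖_(1/e) = (∑ a_i)^e`. -/
theorem Lp_rpow_mul_le {a c : ι → ℝ} (ha : ∀ i ∈ s, 0 ≤ a i) (hc : ∀ i ∈ s, 0 ≤ c i)
    {e v w : ℝ} (he : 0 < e) (hv : 0 < v) (hw : 0 < w) (hevw : e + v⁻¹ = w⁻¹) :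
    (∑ i ∈ s, (a i ^ e * c i) ^ w) ^ w⁻¹
      ≤ (∑ i ∈ s, a i) ^ e * (∑ i ∈ s, c i ^ v) ^ v⁻¹ := by
  have hT : e⁻¹.HolderTriple v w := ⟨by rwa [inv_inv], inv_pos.2 he, hv⟩
  have holder := Lr_rpow_le_Lp_mul_Lq_of_nonneg s hT (f := fun i => a i ^ e)
    (fun i hi => rpow_nonneg (ha i hi) _) hc
  rw [sum_congr rfl fun i hi => rpow_rpow_inv (ha i hi) he.ne'] at holder
  have hA : 0 ≤ ∑ i ∈ s, a i := sum_nonneg ha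
  have hC : 0 ≤ ∑ i ∈ s, c i ^ v := sum_nonneg fun i hi => rpow_nonneg (hc i hi) v
  calc (∑ i ∈ s, (a i ^ e * c i) ^ w) ^ w⁻¹
      ≤ ((∑ i ∈ s, a i) ^ (w / e⁻¹) * (∑ i ∈ s, c i ^ v) ^ (w / v)) ^ w⁻¹ :=
        rpow_le_rpow (sum_nonneg fun i hi => rpow_nonneg
          (mul_nonneg (rpow_nonneg (ha i hi) e) (hc i hi)) w) holder (inv_nonneg.2 hw.le)
    _ = (∑ i ∈ s, a i) ^ e * (∑ i ∈ s, c i ^ v) ^ v⁻¹ := by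
        rw [mul_rpow (by positivity) (by positivity), ← rpow_mul hA, ← rpow_mul hC]
        congr 2 <;> field_simp

theorem rpow_le_of_rpow_add_le_rpow_mul {x y z b : ℝ} (hx : 0 ≤ x) (hz : z ≠ 0) (hb : 0 ≤ b)
    (h : x ^ (y + z) ≤ x ^ y * b) : x ^ z ≤ b := by
  rcases hx.eq_or_lt with rfl | hx
  · rwa [zero_rpow hz]
  · rw [rpow_add hx] at h
    exact le_of_mul_le_mul_left h (rpow_pos_of_pos hx y)

end Real

theorem ENNReal.sum_toReal_sub_le_of_add_le {ι : Type*} (s : Finset ι) {a b : ι → ℝ≥0∞}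
    {c d : ℝ≥0∞} (ha : ∀ i ∈ s, a i ≠ ∞) (hb : ∀ i ∈ s, b i ≠ ∞) (hc : c ≠ ∞) (hd : d ≠ ∞)
    (h : ∑ i ∈ s, a i + c ≤ ∑ i ∈ s, b i + d) :
    ∑ i ∈ s, ((a i).toReal - (b i).toReal) ≤ d.toReal - c.toReal := by
  have h' := ENNReal.toReal_mono (add_ne_top.2 ⟨sum_ne_top.2 hb, hd⟩) h
  rw [toReal_add (sum_ne_top.2 ha) hc, toReal_add (sum_ne_top.2 hb) hd, toReal_sum ha,
    toReal_sum hb] at h'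
  rw [sum_sub_distrib]
  linarith

section lpNormE

variable {F G : Type*} [NormedAddCommGroup F] [NormedAddCommGroup G] {m : ℕ}

theorem lpNormE_top (y : Fin m → F) : lpNormE ∞ y = ⨆ j, ‖y j‖ := if_pos rfl

theorem lpNormE_of_ne_top {p : ℝ≥0∞} (hp : p ≠ ∞) (y : Fin m → F) :
    lpNormE p y = (∑ j, ‖y j‖ ^ p.toReal) ^ (1 / p.toReal) := if_neg hp

theorem lpNormE_nonneg (p : ℝ≥0∞) (y : Fin m → F) : 0 ≤ lpNormE p y := by
  unfold lpNormE
  split_ifs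
  · exact Real.iSup_nonneg fun j => norm_nonneg _
  · positivity

theorem lpNormE_top_le {y : Fin m → F} {B : ℝ} (hB : 0 ≤ B) (h : ∀ j, ‖y j‖ ≤ B) :
    lpNormE ∞ y ≤ B := by
  rw [lpNormE_top]
  exact Real.iSup_le h hB

theorem norm_le_lpNormE {p : ℝ≥0∞} (hp : 0 < p) (y : Fin m → F) (j : Fin m) :
    ‖y j‖ ≤ lpNormE p y := by
  by_cases htop : p = ∞
  · rw [htop, lpNormE_top]
    exact le_ciSup (Set.finite_range fun k => ‖y k‖).bddAbove j
  · have ht : 0 < p.toReal := ENNReal.toReal_pos hp.ne' htop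
    rw [lpNormE_of_ne_top htop, one_div]
    calc ‖y j‖ = (‖y j‖ ^ p.toReal) ^ p.toReal⁻¹ := (Real.rpow_rpow_inv (norm_nonneg _) ht.ne').symm
      _ ≤ (∑ k, ‖y k‖ ^ p.toReal) ^ p.toReal⁻¹ := by
          gcongr
          exact single_le_sum (f := fun k => ‖y k‖ ^ p.toReal) (fun k _ => by positivity)
            (mem_univ j)

theorem lpNormE_le_of_norm_le (p : ℝ≥0∞) {y : Fin m → F} {z : Fin m → G}
    (h : ∀ j, ‖y j‖ ≤ ‖z j‖) : lpNormE p y ≤ lpNormE p z := by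
  by_cases htop : p = ∞
  · subst htop
    exact lpNormE_top_le (lpNormE_nonneg _ _)
      fun j => (h j).trans (norm_le_lpNormE ENNReal.zero_lt_top z j)
  · simp only [lpNormE_of_ne_top htop]
    gcongr with j
    exact h j

theorem lpNormE_fin_one {p : ℝ≥0∞} (hp : 0 < p) (y : F) :
    lpNormE p (fun _ : Fin 1 => y) = ‖y‖ := by
  by_cases htop : p = ∞
  · rw [htop, lpNormE_top]
    exact ciSup_const
  · rw [lpNormE_of_ne_top htop, Fin.sum_univ_one, one_div,
      Real.rpow_rpow_inv (norm_nonneg _) (ENNReal.toReal_pos hp.ne' htop).ne']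

/-- Hölder's inequality; `p.toReal⁻¹` is `1/p` also for `p = ∞`. -/
theorem lpNormE_le_rpow_sum_mul {q p : ℝ≥0∞} (hq : 0 < q) (hqp : q ≤ p) {y : Fin m → F}
    {z : Fin m → G} {a : Fin m → ℝ} (ha : ∀ j, 0 ≤ a j)
    (h : ∀ j, ‖y j‖ ≤ a j ^ (q.toReal⁻¹ - p.toReal⁻¹) * ‖z j‖) :
    lpNormE q y ≤ (∑ j, a j) ^ (q.toReal⁻¹ - p.toReal⁻¹) * lpNormE p z := by
  set e := q.toReal⁻¹ - p.toReal⁻¹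
  rcases hqp.eq_or_lt with rfl | hlt
  · simp only [e, sub_self, Real.rpow_zero, one_mul] at h ⊢
    exact lpNormE_le_of_norm_le q h
  have hqtop : q ≠ ∞ := hlt.ne_top
  have hw : 0 < q.toReal := ENNReal.toReal_pos hq.ne' hqtop
  have hS : 0 ≤ ∑ j, a j := sum_nonneg fun j _ => ha j
  have hc : ∀ j, 0 ≤ a j ^ e * ‖z j‖ := fun j => by have := ha j; positivity
  calc lpNormE q y ≤ (∑ j, (a j ^ e * ‖z j‖) ^ q.toReal) ^ q.toReal⁻¹ := by
        rw [lpNormE_of_ne_top hqtop, one_div]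
        gcongr with j
        exact h j
    _ ≤ (∑ j, a j) ^ e * lpNormE p z := ?_
  by_cases hp : p = ∞
  · have he : e = q.toReal⁻¹ := by simp [e, hp]
    have hM0 := lpNormE_nonneg p z
    calc (∑ j, (a j ^ e * ‖z j‖) ^ q.toReal) ^ q.toReal⁻¹
        ≤ (∑ j, a j * lpNormE p z ^ q.toReal) ^ q.toReal⁻¹ := by
          refine Real.rpow_le_rpow (sum_nonneg fun j _ => Real.rpow_nonneg (hc j) _)
            (sum_le_sum fun j _ => ?_) (by positivity)
          rw [Real.mul_rpow (Real.rpow_nonneg (ha j) _) (norm_nonneg _), he,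
            Real.rpow_inv_rpow (ha j) hw.ne']
          gcongr
          · exact ha j
          · exact norm_le_lpNormE (hq.trans hlt) z j
      _ = (∑ j, a j) ^ e * lpNormE p z := by
          rw [← sum_mul, Real.mul_rpow hS (by positivity), Real.rpow_rpow_inv hM0 hw.ne', he]
  · have hv : 0 < p.toReal := ENNReal.toReal_pos (hq.trans hlt).ne' hp
    have he : 0 < e := sub_pos.2 ((inv_lt_inv₀ hv hw).2 (ENNReal.toReal_strict_mono hp hlt))
    rw [lpNormE_of_ne_top hp, one_div]
    exact Real.Lp_rpow_mul_le univ (fun j _ => ha j) (fun j _ => norm_nonneg _) he hv hw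
      (by simp [e])

end lpNormE

section weakNormE

variable {𝕜 : Type*} [RCLike 𝕜] {E : Type*} [NormedAddCommGroup E] [NormedSpace 𝕜 E] {m : ℕ}
  (x : Fin m → E)

theorem weakNormE_top : weakNormE 𝕜 ∞ x = lpNormE ∞ x := by
  rw [weakNormE, if_pos rfl, lpNormE_top]

theorem weakNormE_eq_iSup_lpNormE {r : ℝ≥0∞} (hr : r ≠ ∞) :
    weakNormE 𝕜 r x = ⨆ φ : {φ : E →L[𝕜] 𝕜 // ‖φ‖ ≤ 1}, lpNormE r fun j => φ.1 (x j) := by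
  simp only [weakNormE, if_neg hr, lpNormE_of_ne_top hr]

theorem lpNormE_comp_le_weakNormE (r : ℝ≥0∞) {φ : E →L[𝕜] 𝕜} (hφ : ‖φ‖ ≤ 1) :
    lpNormE r (fun j => φ (x j)) ≤ weakNormE 𝕜 r x := by
  have hφx : ∀ (ψ : E →L[𝕜] 𝕜), ‖ψ‖ ≤ 1 → ∀ j, ‖ψ (x j)‖ ≤ ‖x j‖ := fun ψ hψ j => by
    simpa using ψ.le_of_opNorm_le hψ (x j)
  by_cases hr : r = ∞
  · rw [hr, weakNormE_top]
    exact lpNormE_le_of_norm_le ∞ (hφx φ hφ)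
  · rw [weakNormE_eq_iSup_lpNormE x hr]
    refine le_ciSup (f := fun ψ : {ψ : E →L[𝕜] 𝕜 // ‖ψ‖ ≤ 1} => lpNormE r fun j => ψ.1 (x j))
      ⟨lpNormE r x, ?_⟩ ⟨φ, hφ⟩
    rintro _ ⟨ψ, rfl⟩
    exact lpNormE_le_of_norm_le r (hφx ψ.1 ψ.2)

theorem weakNormE_le_of_forall_lpNormE_le {r : ℝ≥0∞} {B : ℝ}
    (h : ∀ φ : E →L[𝕜] 𝕜, ‖φ‖ ≤ 1 → lpNormE r (fun j => φ (x j)) ≤ B) :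
    weakNormE 𝕜 r x ≤ B := by
  by_cases hr : r = ∞
  · subst hr
    rw [weakNormE_top]
    refine lpNormE_top_le ((lpNormE_nonneg _ _).trans (h 0 (by simp))) fun j => ?_
    obtain ⟨φ, hφ, hφx⟩ := exists_dual_vector'' 𝕜 (x j)
    calc ‖x j‖ = ‖φ (x j)‖ := by simp [hφx]
      _ ≤ lpNormE ∞ fun k => φ (x k) := norm_le_lpNormE ENNReal.zero_lt_top (fun k => φ (x k)) j
      _ ≤ B := h φ hφ
  · rw [weakNormE_eq_iSup_lpNormE x hr]
    have : Nonempty {φ : E →L[𝕜] 𝕜 // ‖φ‖ ≤ 1} := ⟨⟨0, by simp⟩⟩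
    exact ciSup_le fun φ => h φ.1 φ.2

theorem weakNormE_nonneg (r : ℝ≥0∞) : 0 ≤ weakNormE 𝕜 r x :=
  (lpNormE_nonneg r _).trans (lpNormE_comp_le_weakNormE x r (φ := 0) (by simp))

theorem norm_le_weakNormE {r : ℝ≥0∞} (hr : 0 < r) (j : Fin m) : ‖x j‖ ≤ weakNormE 𝕜 r x := by
  obtain ⟨φ, hφ, hφx⟩ := exists_dual_vector'' 𝕜 (x j)
  calc ‖x j‖ = ‖φ (x j)‖ := by simp [hφx]
    _ ≤ lpNormE r fun k => φ (x k) := norm_le_lpNormE hr (fun k => φ (x k)) j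
    _ ≤ weakNormE 𝕜 r x := lpNormE_comp_le_weakNormE x r hφ

theorem weakNormE_fin_one_le {r : ℝ≥0∞} (hr : 0 < r) (v : E) :
    weakNormE 𝕜 r (fun _ : Fin 1 => v) ≤ ‖v‖ :=
  weakNormE_le_of_forall_lpNormE_le _ fun φ hφ => by
    simpa [lpNormE_fin_one hr] using φ.le_of_opNorm_le hφ v

theorem weakNormE_rpow_smul_le {q p : ℝ≥0∞} (hq : 0 < q) (hqp : q ≤ p) {a : Fin m → ℝ}
    (ha : ∀ j, 0 ≤ a j) :
    weakNormE 𝕜 q (fun j => ((a j ^ (q.toReal⁻¹ - p.toReal⁻¹) : ℝ) : 𝕜) • x j)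
      ≤ (∑ j, a j) ^ (q.toReal⁻¹ - p.toReal⁻¹) * weakNormE 𝕜 p x :=
  weakNormE_le_of_forall_lpNormE_le _ fun φ hφ => by
    refine (lpNormE_le_rpow_sum_mul hq hqp ha fun j => ?_).trans
      (mul_le_mul_of_nonneg_left (lpNormE_comp_le_weakNormE x p hφ)
        (Real.rpow_nonneg (sum_nonneg fun j _ => ha j) _))
    rw [map_smul, norm_smul, RCLike.norm_ofReal, abs_of_nonneg (Real.rpow_nonneg (ha j) _)]

end weakNormE

section Multilinear

variable {𝕜 : Type*} [RCLike 𝕜] {n : ℕ} {E : Fin n → Type*} [∀ i, NormedAddCommGroup (E i)]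
  [∀ i, NormedSpace 𝕜 (E i)] {F : Type*} [NormedAddCommGroup F] [NormedSpace 𝕜 F]

theorem ContinuousMultilinearMap.norm_map_rpow_smul (A : ContinuousMultilinearMap 𝕜 E F)
    (v : ∀ i, E i) {c : ℝ} (hc : 0 ≤ c) {e : Fin n → ℝ} (he : ∀ i, 0 ≤ e i) :
    ‖A fun i => ((c ^ e i : ℝ) : 𝕜) • v i‖ = c ^ (∑ i, e i) * ‖A v‖ := by
  rw [A.map_smul_univ, norm_smul, norm_prod, Real.rpow_sum_of_nonneg hc fun i _ => he i]
  congr 1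
  exact prod_congr rfl fun i _ => by
    rw [RCLike.norm_ofReal, abs_of_nonneg (Real.rpow_nonneg hc _)]

def IsAbsSummingWith (p : ℝ≥0∞) (ps : Fin n → ℝ≥0∞) (A : ContinuousMultilinearMap 𝕜 E F)
    (C : ℝ) : Prop :=
  ∀ (m : ℕ) (x : ∀ i, Fin m → E i),
    lpNormE p (fun j => A (fun i => x i j)) ≤ C * ∏ i, weakNormE 𝕜 (ps i) (x i)

namespace IsAbsSummingWith

variable {p q : ℝ≥0∞} {ps qs : Fin n → ℝ≥0∞} {A : ContinuousMultilinearMap 𝕜 E F} {C : ℝ}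

theorem norm_apply_le (h : IsAbsSummingWith q qs A C) (hC : 0 ≤ C) (hq : 0 < q)
    (hqs : ∀ i, 0 < qs i) (hps : ∀ i, 0 < ps i) {m : ℕ} (x : ∀ i, Fin m → E i) (j : Fin m) :
    ‖A fun i => x i j‖ ≤ C * ∏ i, weakNormE 𝕜 (ps i) (x i) :=
  calc ‖A fun i => x i j‖ = lpNormE q fun _ : Fin 1 => A fun i => x i j :=
        (lpNormE_fin_one hq _).symm
    _ ≤ C * ∏ i, weakNormE 𝕜 (qs i) fun _ : Fin 1 => x i j := h 1 fun i _ => x i j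
    _ ≤ C * ∏ i, weakNormE 𝕜 (ps i) (x i) := by
        refine mul_le_mul_of_nonneg_left
          (prod_le_prod (fun i _ => weakNormE_nonneg _ _) fun i _ => ?_) hC
        exact (weakNormE_fin_one_le (hqs i) _).trans (norm_le_weakNormE _ (hps i) j)

theorem inclusion_top (h : IsAbsSummingWith q qs A C) (hC : 0 ≤ C) (hq : 0 < q)
    (hqs : ∀ i, 0 < qs i) (hps : ∀ i, 0 < ps i) : IsAbsSummingWith ∞ ps A C := fun _ x =>
  lpNormE_top_le (mul_nonneg hC (prod_nonneg fun i _ => weakNormE_nonneg (x i) (ps i)))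
    (h.norm_apply_le hC hq hqs hps x)

theorem inclusion_of_ne_top (h : IsAbsSummingWith q qs A C) (hC : 0 ≤ C) (hq : 0 < q) (hqp : q ≤ p)
    (hp : p ≠ ∞) (hqs : ∀ i, 0 < qs i) (hqps : ∀ i, qs i ≤ ps i)
    (hσ : ∑ i, ((qs i).toReal⁻¹ - (ps i).toReal⁻¹) ≤ q.toReal⁻¹ - p.toReal⁻¹) :
    IsAbsSummingWith p ps A C := by
  intro m x
  set e : Fin n → ℝ := fun i => (qs i).toReal⁻¹ - (ps i).toReal⁻¹
  set σ := ∑ i, e i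
  set κ := q.toReal⁻¹ - σ
  have he : ∀ i, 0 ≤ e i := fun i => by
    simpa [e, ENNReal.toReal_inv] using ENNReal.toReal_mono
      (ENNReal.inv_ne_top.2 (hqs i).ne') (ENNReal.inv_le_inv.2 (hqps i))
  have hp0 : 0 < p.toReal := ENNReal.toReal_pos (hq.trans_le hqp).ne' hp
  have hq0 : 0 < q.toReal := ENNReal.toReal_pos hq.ne' (ne_top_of_le_ne_top hp hqp)
  have hκ0 : 0 < κ := by have := inv_pos.2 hp0; linarith
  have hσκ : σ + κ = q.toReal⁻¹ := by ring
  set a : Fin m → ℝ := fun j => ‖A fun i => x i j‖ ^ κ⁻¹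
  have ha : ∀ j, 0 ≤ a j := fun j => Real.rpow_nonneg (norm_nonneg _) _
  have hs : ∀ j, ‖A fun i => x i j‖ = a j ^ κ := fun j =>
    (Real.rpow_inv_rpow (norm_nonneg _) hκ0.ne').symm
  set S := ∑ j, a j
  have hS : 0 ≤ S := sum_nonneg fun j _ => ha j
  have hlhs : lpNormE q (fun j => A fun i => ((a j ^ e i : ℝ) : 𝕜) • x i j) = S ^ q.toReal⁻¹ := by
    rw [lpNormE_of_ne_top (ne_top_of_le_ne_top hp hqp), one_div]
    congr 1
    refine sum_congr rfl fun j _ => ?_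
    rw [A.norm_map_rpow_smul _ (ha j) he, hs j, ← Real.rpow_add' (ha j) (hσκ ▸ by positivity),
      hσκ, Real.rpow_inv_rpow (ha j) hq0.ne']
  have hrhs : ∏ i, weakNormE 𝕜 (qs i) (fun j => ((a j ^ e i : ℝ) : 𝕜) • x i j)
      ≤ S ^ σ * ∏ i, weakNormE 𝕜 (ps i) (x i) := by
    rw [Real.rpow_sum_of_nonneg hS fun i _ => he i, ← prod_mul_distrib]
    exact prod_le_prod (fun i _ => weakNormE_nonneg _ _)
      fun i _ => weakNormE_rpow_smul_le (x i) (hqs i) (hqps i) ha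
  have hSκ : S ^ κ ≤ C * ∏ i, weakNormE 𝕜 (ps i) (x i) := by
    have key := (h m _).trans (mul_le_mul_of_nonneg_left hrhs hC)
    rw [hlhs, ← hσκ, mul_left_comm] at key
    exact Real.rpow_le_of_rpow_add_le_rpow_mul hS hκ0.ne'
      (mul_nonneg hC (prod_nonneg fun i _ => weakNormE_nonneg (x i) (ps i))) key
  calc lpNormE p (fun j => A fun i => x i j)
      = (∑ j, (a j ^ κ) ^ p.toReal) ^ (1 / p.toReal) := by
        rw [lpNormE_of_ne_top hp]
        simp only [hs]
    _ ≤ (∑ j, (a j ^ κ) ^ κ⁻¹) ^ (1 / κ⁻¹) :=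
        Real.Lp_le_Lp_of_exponent_le _ (fun j _ => Real.rpow_nonneg (ha j) _) (inv_pos.2 hκ0)
          ((inv_le_comm₀ hκ0 hp0).2 (by linarith))
    _ = S ^ κ := by simp only [Real.rpow_rpow_inv (ha _) hκ0.ne', one_div, inv_inv, S]
    _ ≤ C * ∏ i, weakNormE 𝕜 (ps i) (x i) := hSκ

end IsAbsSummingWith

end Multilinear

theorem inclusion_theorem_general {𝕜 : Type*} [RCLike 𝕜] {n : ℕ}
    (E : Fin n → Type*) [∀ i, NormedAddCommGroup (E i)] [∀ i, NormedSpace 𝕜 (E i)]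
    (F : Type*) [NormedAddCommGroup F] [NormedSpace 𝕜 F]
    (p q : ℝ≥0∞) (ps qs : Fin n → ℝ≥0∞)
    (hq : 0 < q) (hqp : q ≤ p)
    (hqs : ∀ i, 0 < qs i) (hqps : ∀ i, qs i ≤ ps i)
    (hmain : (∑ i, 1 / qs i) + 1 / p ≤ (∑ i, 1 / ps i) + 1 / q)
    (A : ContinuousMultilinearMap 𝕜 E F) (C : ℝ) (hC : 0 < C)
    (hA : ∀ (m : ℕ) (x : ∀ i, Fin m → E i),
      lpNormE q (fun j => A (fun i => x i j)) ≤ C * ∏ i, weakNormE 𝕜 (qs i) (x i)) :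
    ∀ (m : ℕ) (x : ∀ i, Fin m → E i),
      lpNormE p (fun j => A (fun i => x i j)) ≤ C * ∏ i, weakNormE 𝕜 (ps i) (x i) := by
  have hA' : IsAbsSummingWith q qs A C := hA
  have hps : ∀ i, 0 < ps i := fun i => (hqs i).trans_le (hqps i)
  by_cases hp : p = ∞
  · subst hp
    exact hA'.inclusion_top hC.le hq hqs hps
  refine hA'.inclusion_of_ne_top hC.le hq hqp hp hqs hqps ?_
  have hp0 : p ≠ 0 := (hq.trans_le hqp).ne'
  simpa [ENNReal.toReal_inv] using ENNReal.sum_toReal_sub_le_of_add_le univ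
    (fun i _ => by simpa using (hqs i).ne') (fun i _ => by simpa using (hps i).ne')
    (by simpa using hp0) (by simpa using hq.ne') hmain

/-- **Inclusion Theorem.** If `0 < q ≤ p ≤ ∞`, `0 < q_j ≤ p_j ≤ ∞` for all `j`,
`1/q ≤ ∑_j 1/q_j` and `∑_j 1/q_j − 1/q ≤ ∑_j 1/p_j − 1/p` (stated additively to avoid
truncated subtraction), then every absolutely `(q; q₁, …, qₙ)`-summing multilinear map is
absolutely `(p; p₁, …, pₙ)`-summing with `π_{(p;p₁,…,pₙ)}(A) ≤ π_{(q;q₁,…,qₙ)}(A)`: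
any summing constant for the former works for the latter. -/
theorem inclusion_theorem {𝕜 : Type*} [RCLike 𝕜] {n : ℕ}
    (E : Fin n → Type*) [∀ i, NormedAddCommGroup (E i)] [∀ i, NormedSpace 𝕜 (E i)]
    [∀ i, CompleteSpace (E i)]
    (F : Type*) [NormedAddCommGroup F] [NormedSpace 𝕜 F] [CompleteSpace F]
    (p q : ℝ≥0∞) (ps qs : Fin n → ℝ≥0∞)
    (hq : 0 < q) (hqp : q ≤ p)
    (hqs : ∀ i, 0 < qs i) (hqps : ∀ i, qs i ≤ ps i)
    (hql : 1 / q ≤ ∑ i, 1 / qs i)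
    (hmain : (∑ i, 1 / qs i) + 1 / p ≤ (∑ i, 1 / ps i) + 1 / q)
    (A : ContinuousMultilinearMap 𝕜 E F) (C : ℝ) (hC : 0 < C)
    (hA : ∀ (m : ℕ) (x : ∀ i, Fin m → E i),
      lpNormE q (fun j => A (fun i => x i j)) ≤ C * ∏ i, weakNormE 𝕜 (qs i) (x i)) :
    ∀ (m : ℕ) (x : ∀ i, Fin m → E i),
      lpNormE p (fun j => A (fun i => x i j)) ≤ C * ∏ i, weakNormE 𝕜 (ps i) (x i) :=
  inclusion_theorem_general E F p q ps qs hq hqp hqs hqps hmain A C hC hA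
end

section
/- Let n ≥ 2 and let E_1, …, E_n be Banach spaces such that E_3', …, E_n' have the Littlewood–Orlicz property and every continuous bilinear form on E_1 × E_2 is 2-dominated (i.e. absolutely (1;2,2)-summing). Then every continuous n-linear form A : E_1 × ⋯ × E_n → 𝕂 is absolutely (1;2,…,2)-summing. -/
open scoped BigOperators NNReal ENNReal

/-- The weak `ℓ_r` norm of a finite family `(x_j)` in a normed space:
`sup_{‖φ‖ ≤ 1} (∑_j ‖φ(x_j)‖^r)^(1/r)`. -/
noncomputable def weakNorm (𝕜 : Type*) [RCLike 𝕜] {E : Type*} [NormedAddCommGroup E]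
    [NormedSpace 𝕜 E] (r : ℝ) {m : ℕ} (x : Fin m → E) : ℝ :=
  ⨆ φ : {φ : E →L[𝕜] 𝕜 // ‖φ‖ ≤ 1}, (∑ j, ‖φ.1 (x j)‖ ^ r) ^ (1 / r)

/-- A Banach space `X` has the Littlewood–Orlicz property: `ℓ₁ʷ(X)` embeds continuously into
`ℓ₂ ⊗_π X = ℓ₂⟨X⟩`, expressed through the Bu–Diestel duality characterization:
`∑_j |ψ_j(x_j)| ≤ C ‖(x_j)‖_{ℓ₁ʷ(X)} ‖(ψ_j)‖_{ℓ₂ʷ(X')}` for all finite families. -/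
def LittlewoodOrlicz (𝕜 : Type*) [RCLike 𝕜] (X : Type*) [NormedAddCommGroup X]
    [NormedSpace 𝕜 X] : Prop :=
  ∃ C > 0, ∀ (m : ℕ) (x : Fin m → X) (ψ : Fin m → (X →L[𝕜] 𝕜)),
    ∑ j, ‖ψ j (x j)‖ ≤ C * weakNorm 𝕜 1 x * weakNorm 𝕜 2 ψ

/-- The Rademacher norm of a finite family `(x_j)_{j=1}^m` in a normed space:
`(2^{-m} ∑_{ε ∈ {-1,1}^m} ‖∑_j ε_j x_j‖²)^{1/2}`. -/
noncomputable def radNorm {E : Type*} [NormedAddCommGroup E] {m : ℕ} (x : Fin m → E) : ℝ :=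
  ((∑ ε : Fin m → Bool, ‖∑ j, (if ε j then x j else -x j)‖ ^ 2) / (2 : ℝ) ^ m) ^ ((1 : ℝ) / 2)

/-- A continuous multilinear map is absolutely `(p; p₁, …, pₙ)`-summing. -/
def IsAbsSumming {𝕜 : Type*} [RCLike 𝕜] {n : ℕ} {E : Fin n → Type*}
    [∀ i, NormedAddCommGroup (E i)] [∀ i, NormedSpace 𝕜 (E i)]
    {F : Type*} [NormedAddCommGroup F] [NormedSpace 𝕜 F]
    (p : ℝ) (ps : Fin n → ℝ) (A : ContinuousMultilinearMap 𝕜 E F) : Prop :=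
  ∃ C > 0, ∀ (m : ℕ) (x : ∀ i, Fin m → E i),
    (∑ j, ‖A (fun i => x i j)‖ ^ p) ^ (1 / p) ≤ C * ∏ i, weakNorm 𝕜 (ps i) (x i)

/-! Induction on `n`, the case `n = 2` being the hypothesis on `E₁ × E₂`. For the step, regard `A`
as the `n`-linear map `G = A.curryRight` with values in `E_{n+1}'`. For every `Ξ ∈ E_{n+1}''` the
form `Ξ ∘ G` is `(1; 2, …, 2)`-summing by induction, and Baire's theorem (a pointwise bounded family
of continuous seminorms on a Banach space is uniformly bounded) makes its summing constant
`≤ K ‖Ξ ∘ G‖`; hence `‖(G(x_j))_j‖_{ℓ₁ʷ} ≤ K ‖G‖ ∏_{i ≤ n} ‖(x^i_j)_j‖_{ℓ₂ʷ}`. The Littlewood–Orlicz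
property of `E_{n+1}'`, applied to `G(x_j)` and `ψ_j` = evaluation at `x^{n+1}_j`, then bounds
`∑_j |A(x_j)| = ∑_j |ψ_j(G(x_j))|` by a constant times the product of all `n + 1` weak `ℓ₂` norms.
-/

section WeakNorm

variable {𝕜 : Type*} [RCLike 𝕜] {E : Type*} [NormedAddCommGroup E] [NormedSpace 𝕜 E] {m : ℕ}

instance : Nonempty {φ : E →L[𝕜] 𝕜 // ‖φ‖ ≤ 1} := ⟨⟨0, by simp⟩⟩

theorem weakNorm_nonneg (r : ℝ) (x : Fin m → E) : 0 ≤ weakNorm 𝕜 r x :=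
  Real.iSup_nonneg fun _ => by positivity

theorem le_weakNorm {r : ℝ} (hr : 0 < r) (x : Fin m → E) {φ : E →L[𝕜] 𝕜} (hφ : ‖φ‖ ≤ 1) :
    (∑ j, ‖φ (x j)‖ ^ r) ^ (1 / r) ≤ weakNorm 𝕜 r x := by
  refine le_ciSup (f := fun ψ : {ψ : E →L[𝕜] 𝕜 // ‖ψ‖ ≤ 1} => (∑ j, ‖ψ.1 (x j)‖ ^ r) ^ (1 / r))
    ⟨(∑ j, ‖x j‖ ^ r) ^ (1 / r), ?_⟩ ⟨φ, hφ⟩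
  rintro _ ⟨ψ, rfl⟩
  dsimp only
  gcongr with j
  simpa using ψ.1.le_of_opNorm_le ψ.2 (x j)

theorem weakNorm_le {r : ℝ} {x : Fin m → E} {M : ℝ}
    (h : ∀ φ : E →L[𝕜] 𝕜, ‖φ‖ ≤ 1 → (∑ j, ‖φ (x j)‖ ^ r) ^ (1 / r) ≤ M) :
    weakNorm 𝕜 r x ≤ M :=
  ciSup_le fun φ => h φ.1 φ.2

theorem weakNorm_one_le {x : Fin m → E} {M : ℝ}
    (h : ∀ φ : E →L[𝕜] 𝕜, ‖φ‖ ≤ 1 → ∑ j, ‖φ (x j)‖ ≤ M) :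
    weakNorm 𝕜 1 x ≤ M :=
  weakNorm_le fun φ hφ => by simpa using h φ hφ

theorem weakNorm_map_le {F : Type*} [NormedAddCommGroup F] [NormedSpace 𝕜 F] {r : ℝ}
    (hr : 0 < r) (T : E →L[𝕜] F) (hT : ∀ z, ‖T z‖ ≤ ‖z‖) (x : Fin m → E) :
    weakNorm 𝕜 r (fun j => T (x j)) ≤ weakNorm 𝕜 r x := by
  refine weakNorm_le fun φ hφ => le_weakNorm hr x (φ := φ.comp T) ?_
  refine ContinuousLinearMap.opNorm_le_bound _ zero_le_one fun z => ?_
  calc ‖φ (T z)‖ ≤ ‖φ‖ * ‖T z‖ := φ.le_opNorm _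
    _ ≤ 1 * ‖z‖ := by gcongr; exact hT z

end WeakNorm

theorem prod_weakNorm_nonneg {𝕜 : Type*} [RCLike 𝕜] {n : ℕ} {E : Fin n → Type*}
    [∀ i, NormedAddCommGroup (E i)] [∀ i, NormedSpace 𝕜 (E i)] (ps : Fin n → ℝ) {m : ℕ}
    (x : ∀ i, Fin m → E i) : 0 ≤ ∏ i, weakNorm 𝕜 (ps i) (x i) :=
  Finset.prod_nonneg fun i _ => weakNorm_nonneg (ps i) (x i)

theorem isAbsSumming_one_iff {𝕜 : Type*} [RCLike 𝕜] {n : ℕ} {E : Fin n → Type*}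
    [∀ i, NormedAddCommGroup (E i)] [∀ i, NormedSpace 𝕜 (E i)]
    {F : Type*} [NormedAddCommGroup F] [NormedSpace 𝕜 F]
    {ps : Fin n → ℝ} {A : ContinuousMultilinearMap 𝕜 E F} :
    IsAbsSumming 1 ps A ↔ ∃ C, ∀ (m : ℕ) (x : ∀ i, Fin m → E i),
      ∑ j, ‖A (fun i => x i j)‖ ≤ C * ∏ i, weakNorm 𝕜 (ps i) (x i) := by
  simp only [IsAbsSumming, Real.rpow_one, div_one]
  refine ⟨fun ⟨C, _, hC⟩ => ⟨C, hC⟩, fun ⟨C, hC⟩ => ⟨max C 1, by positivity, fun m x => ?_⟩⟩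
  have := prod_weakNorm_nonneg (𝕜 := 𝕜) ps x
  exact (hC m x).trans (by gcongr; exact le_max_left C 1)

theorem Seminorm.exists_forall_le_mul_norm_of_bddAbove {𝕜 W ι : Type*}
    [NontriviallyNormedField 𝕜] [NormedAddCommGroup W] [NormedSpace 𝕜 W] [CompleteSpace W]
    (p : ι → Seminorm 𝕜 W) (hp : ∀ i, Continuous (p i))
    (hbdd : ∀ w, BddAbove (Set.range fun i => p i w)) :
    ∃ K, 0 < K ∧ ∀ i w, p i w ≤ K * ‖w‖ := by
  have hbdd' : BddAbove (Set.range p) := Seminorm.bddAbove_range_iff.mpr hbdd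
  have hcont : Continuous ⇑(⨆ i, p i : Seminorm 𝕜 W) := by
    rw [Seminorm.coe_iSup_eq hbdd']
    exact Seminorm.continuous_iSup p hp hbdd'
  obtain ⟨K, hK0, hK⟩ := Seminorm.bound_of_continuous_normedSpace _ hcont
  exact ⟨K, hK0, fun i w => (le_ciSup hbdd' i w).trans (hK w)⟩

section UniformSumming

variable {𝕜 : Type*} [RCLike 𝕜] {n : ℕ} {E : Fin n → Type*}
  [∀ i, NormedAddCommGroup (E i)] [∀ i, NormedSpace 𝕜 (E i)]
  {F : Type*} [NormedAddCommGroup F] [NormedSpace 𝕜 F]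

-- The division makes this `0` when one of the weak norms vanishes.
noncomputable def summingRatio (ps : Fin n → ℝ) {m : ℕ} (x : ∀ i, Fin m → E i) :
    Seminorm 𝕜 (ContinuousMultilinearMap 𝕜 E F) :=
  Seminorm.of (fun B => (∑ j, ‖B (fun i => x i j)‖) / ∏ i, weakNorm 𝕜 (ps i) (x i))
    (fun B B' => by
      rw [← add_div, ← Finset.sum_add_distrib]
      exact div_le_div_of_nonneg_right (Finset.sum_le_sum fun j _ => norm_add_le (B _) (B' _))
        (prod_weakNorm_nonneg ps x))
    (fun c B => by
      simp only [smul_apply, norm_smul, ← Finset.mul_sum, mul_div_assoc])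

theorem summingRatio_apply (ps : Fin n → ℝ) {m : ℕ} (x : ∀ i, Fin m → E i)
    (B : ContinuousMultilinearMap 𝕜 E F) :
    summingRatio ps x B = (∑ j, ‖B (fun i => x i j)‖) / ∏ i, weakNorm 𝕜 (ps i) (x i) :=
  rfl

theorem continuous_summingRatio (ps : Fin n → ℝ) {m : ℕ} (x : ∀ i, Fin m → E i) :
    Continuous (summingRatio (𝕜 := 𝕜) (F := F) ps x) :=
  (continuous_finsetSum _ fun _ _ => (continuous_eval_const _).norm).div_const _

theorem exists_summing_bound_of_forall_isAbsSumming [CompleteSpace F] {ps : Fin n → ℝ}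
    (h : ∀ B : ContinuousMultilinearMap 𝕜 E F, IsAbsSumming 1 ps B) :
    ∃ K, 0 < K ∧ ∀ (B : ContinuousMultilinearMap 𝕜 E F) (m : ℕ) (x : ∀ i, Fin m → E i),
      ∑ j, ‖B (fun i => x i j)‖ ≤ K * ‖B‖ * ∏ i, weakNorm 𝕜 (ps i) (x i) := by
  choose C hC using fun B => isAbsSumming_one_iff.mp (h B)
  have hbdd : ∀ B : ContinuousMultilinearMap 𝕜 E F,
      BddAbove (Set.range fun x : Σ m, ∀ i, Fin m → E i => summingRatio ps x.2 B) := by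
    refine fun B => ⟨|C B|, ?_⟩
    rintro _ ⟨⟨m, x⟩, rfl⟩
    dsimp only
    rcases (prod_weakNorm_nonneg (𝕜 := 𝕜) ps x).eq_or_lt with hP | hP
    · rw [summingRatio_apply, ← hP, div_zero]
      exact abs_nonneg _
    · rw [summingRatio_apply, div_le_iff₀ hP]
      exact (hC B m x).trans (by gcongr; exact le_abs_self _)
  obtain ⟨K, hK0, hK⟩ := Seminorm.exists_forall_le_mul_norm_of_bddAbove _
    (fun x => continuous_summingRatio ps x.2) hbdd
  refine ⟨K, hK0, fun B m x => ?_⟩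
  rcases (prod_weakNorm_nonneg (𝕜 := 𝕜) ps x).eq_or_lt with hP | hP
  · simpa only [← hP, mul_zero] using hC B m x
  · have := hK ⟨m, x⟩ B
    rwa [summingRatio_apply, div_le_iff₀ hP] at this

end UniformSumming

theorem weakNorm_one_map_le {𝕜 : Type*} [RCLike 𝕜] {n : ℕ} {E : Fin n → Type*}
    [∀ i, NormedAddCommGroup (E i)] [∀ i, NormedSpace 𝕜 (E i)]
    {X : Type*} [NormedAddCommGroup X] [NormedSpace 𝕜 X] {ps : Fin n → ℝ} {K : ℝ} (hK0 : 0 ≤ K)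
    (hK : ∀ (B : ContinuousMultilinearMap 𝕜 E 𝕜) (m : ℕ) (x : ∀ i, Fin m → E i),
      ∑ j, ‖B (fun i => x i j)‖ ≤ K * ‖B‖ * ∏ i, weakNorm 𝕜 (ps i) (x i))
    (G : ContinuousMultilinearMap 𝕜 E X) {m : ℕ} (x : ∀ i, Fin m → E i) :
    weakNorm 𝕜 1 (fun j => G (fun i => x i j)) ≤ K * ‖G‖ * ∏ i, weakNorm 𝕜 (ps i) (x i) := by
  refine weakNorm_one_le fun φ hφ => ?_
  have := prod_weakNorm_nonneg (𝕜 := 𝕜) ps x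
  calc ∑ j, ‖φ (G (fun i => x i j))‖
      ≤ K * ‖φ.compContinuousMultilinearMap G‖ * ∏ i, weakNorm 𝕜 (ps i) (x i) :=
        hK (φ.compContinuousMultilinearMap G) m x
    _ ≤ K * (1 * ‖G‖) * ∏ i, weakNorm 𝕜 (ps i) (x i) := by
        gcongr
        exact (φ.norm_compContinuousMultilinearMap_le G).trans (by gcongr)
    _ = K * ‖G‖ * ∏ i, weakNorm 𝕜 (ps i) (x i) := by ring

theorem isAbsSumming_one_two_succ {𝕜 : Type*} [RCLike 𝕜] {n : ℕ}
    {E : Fin (n + 1) → Type*} [∀ i, NormedAddCommGroup (E i)] [∀ i, NormedSpace 𝕜 (E i)]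
    (hLO : LittlewoodOrlicz 𝕜 (E (Fin.last n) →L[𝕜] 𝕜))
    (hinit : ∀ B : ContinuousMultilinearMap 𝕜 (fun i : Fin n => E i.castSucc) 𝕜,
      IsAbsSumming 1 (fun _ => 2) B)
    (A : ContinuousMultilinearMap 𝕜 E 𝕜) :
    IsAbsSumming 1 (fun _ => 2) A := by
  obtain ⟨K, hK0, hK⟩ := exists_summing_bound_of_forall_isAbsSumming hinit
  obtain ⟨CL, hCL0, hCL⟩ := hLO
  refine isAbsSumming_one_iff.mpr ⟨CL * (K * ‖A.curryRight‖), fun m x => ?_⟩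
  set y : ∀ i : Fin n, Fin m → E i.castSucc := fun i => x i.castSucc
  set v : Fin m → (E (Fin.last n) →L[𝕜] 𝕜) := fun j => A.curryRight (fun i => y i j)
  set ψ := fun j => NormedSpace.inclusionInDoubleDual 𝕜 _ (x (Fin.last n) j)
  have hv : weakNorm 𝕜 1 v ≤ K * ‖A.curryRight‖ * ∏ i, weakNorm 𝕜 2 (y i) :=
    weakNorm_one_map_le hK0.le hK A.curryRight y
  have hψ : weakNorm 𝕜 2 ψ ≤ weakNorm 𝕜 2 (x (Fin.last n)) :=
    weakNorm_map_le two_pos _ (NormedSpace.double_dual_bound 𝕜 _) _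
  have := prod_weakNorm_nonneg (𝕜 := 𝕜) (fun _ => 2) y
  calc ∑ j, ‖A (fun i => x i j)‖ = ∑ j, ‖ψ j (v j)‖ := by
        simp only [ψ, v, y, NormedSpace.dual_def, ContinuousMultilinearMap.curryRight_apply]
        exact Finset.sum_congr rfl fun j _ => congrArg (‖A ·‖) (Fin.snoc_init_self _).symm
    _ ≤ CL * weakNorm 𝕜 1 v * weakNorm 𝕜 2 ψ := hCL m v _
    _ ≤ CL * (K * ‖A.curryRight‖ * ∏ i, weakNorm 𝕜 2 (y i)) * weakNorm 𝕜 2 (x (Fin.last n)) := by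
        gcongr
        exact weakNorm_nonneg _ _
    _ = CL * (K * ‖A.curryRight‖) * ∏ i, weakNorm 𝕜 2 (x i) := by
        rw [Fin.prod_univ_castSucc]
        ring

theorem isAbsSumming_one_two_of_twoDominated {𝕜 : Type*} [RCLike 𝕜] {E : Fin 2 → Type*}
    [∀ i, NormedAddCommGroup (E i)] [∀ i, NormedSpace 𝕜 (E i)]
    (hdom : ∀ B : E 0 →L[𝕜] E 1 →L[𝕜] 𝕜, ∃ C > 0, ∀ (m : ℕ) (x : Fin m → E 0) (y : Fin m → E 1),
      ∑ j, ‖B (x j) (y j)‖ ≤ C * weakNorm 𝕜 2 x * weakNorm 𝕜 2 y)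
    (A : ContinuousMultilinearMap 𝕜 E 𝕜) :
    IsAbsSumming 1 (fun _ => 2) A := by
  obtain ⟨C, -, hC⟩ := hdom (A.curryRight.curryRight fun i => i.elim0)
  refine isAbsSumming_one_iff.mpr ⟨C, fun m x => ?_⟩
  have hA : ∀ v : ∀ i, E i, A v = A.curryRight.curryRight (fun i => i.elim0) (v 0) (v 1) := by
    intro v
    simp only [ContinuousMultilinearMap.curryRight_apply]
    congr 1
    ext i
    fin_cases i <;> rfl
  simpa only [hA, Fin.prod_univ_two, mul_assoc] using hC m (x 0) (x 1)

theorem isAbsSumming_one_two_of_forall_littlewoodOrlicz {𝕜 : Type*} [RCLike 𝕜] {n : ℕ}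
    (hn : 2 ≤ n) {E : Fin n → Type*} [∀ i, NormedAddCommGroup (E i)] [∀ i, NormedSpace 𝕜 (E i)]
    (hLO : ∀ i : Fin n, 2 ≤ i.val → LittlewoodOrlicz 𝕜 (E i →L[𝕜] 𝕜))
    (hinit : ∀ B : ContinuousMultilinearMap 𝕜 (fun i : Fin 2 => E (Fin.castLE hn i)) 𝕜,
      IsAbsSumming 1 (fun _ => 2) B)
    (A : ContinuousMultilinearMap 𝕜 E 𝕜) :
    IsAbsSumming 1 (fun _ => 2) A := by
  induction n, hn using Nat.le_induction with
  | base => exact hinit A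
  | succ n hn ih =>
    exact isAbsSumming_one_two_succ (hLO (Fin.last n) (by simpa using hn))
      (ih (fun i hi => hLO i.castSucc hi) hinit) A

/-- If `E₃', …, E_n'` have the Littlewood–Orlicz property and every continuous bilinear form
on `E₁ × E₂` is 2-dominated (i.e. absolutely `(1; 2, 2)`-summing), then every continuous
`n`-linear form on `E₁ × ⋯ × E_n` is absolutely `(1; 2, …, 2)`-summing. -/
theorem perez_garcia_generalization {𝕜 : Type*} [RCLike 𝕜] {n : ℕ} (hn : 2 ≤ n)
    (E : Fin n → Type*) [∀ i, NormedAddCommGroup (E i)] [∀ i, NormedSpace 𝕜 (E i)]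
    (hLO : ∀ i : Fin n, 2 ≤ i.val → LittlewoodOrlicz 𝕜 (E i →L[𝕜] 𝕜))
    (hdom : ∀ B : E ⟨0, by omega⟩ →L[𝕜] E ⟨1, by omega⟩ →L[𝕜] 𝕜,
      ∃ C > 0, ∀ (m : ℕ) (x : Fin m → E ⟨0, by omega⟩) (y : Fin m → E ⟨1, by omega⟩),
        ∑ j, ‖B (x j) (y j)‖ ≤ C * weakNorm 𝕜 2 x * weakNorm 𝕜 2 y)
    (A : ContinuousMultilinearMap 𝕜 E 𝕜) :
    IsAbsSumming 1 (fun _ => 2) A :=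
  isAbsSumming_one_two_of_forall_littlewoodOrlicz hn hLO
    (isAbsSumming_one_two_of_twoDominated (E := fun i : Fin 2 => E (Fin.castLE hn i)) hdom) A
end
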